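/- Let n ≥ 1, a,b ∈ ℤ with gcd(a,b,n)=1, Λ = {(u,v) ∈ ℤ² : au+bv ≡ 0 (mod n)}, and d = gcd(b−a,n). For 0 ≤ i ≤ d, the point (n − i·n/d, i·n/d) is visible in Λ if and only if the residue class a(d−i) + bi has order n/d in ℤ/nℤ, i.e., gcd(a(d−i)+bi, n) = d. -/

import Mathlib

/-!
Write `m = n / d`, `b - a = d e` and `c = a + e i`; the point is then `v = m • (d - i, i)` and
`a (d - i) + b i = d c`. A point `v` is `k` times a point of `Λ` exactly when `k` divides both
coordinates and `n k ∣ a v₁ + b v₂ = n c`, so `v` is visible iff `gcd(v₁, v₂) = m · gcd(d, i)` is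
coprime to `c`. A common divisor of `gcd(d, i)` and `c` divides `a`, `b` and `n`, hence is `1`,
and the condition becomes `gcd(c, m) = 1`, i.e. `gcd(d c, n) = d`.
-/

/-- A nonzero point `v` of `Λ` is visible in `Λ` if `(1/k) • v ∉ Λ` for all `k ≥ 2`. -/
def IsVisibleInSet (Λ : Set (ℤ × ℤ)) (v : ℤ × ℤ) : Prop :=
  ∀ k : ℕ, 2 ≤ k → ∀ w ∈ Λ, (k : ℤ) • w ≠ v

theorem Nat.coprime_iff_forall_two_le_not_dvd {x y : ℕ} :
    Nat.Coprime x y ↔ ∀ k, 2 ≤ k → k ∣ x → ¬ k ∣ y := by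
  refine ⟨fun hxy k hk hkx hky => ?_, fun h => Nat.coprime_of_dvd fun p hp => h p hp.two_le⟩
  have := Nat.eq_one_of_dvd_coprimes hxy hkx hky
  omega

section Visibility

variable {n a b : ℤ}

theorem isVisibleInSet_iff_forall_not_dvd (v : ℤ × ℤ) :
    IsVisibleInSet {p : ℤ × ℤ | n ∣ a * p.1 + b * p.2} v ↔
      ∀ k : ℕ, 2 ≤ k → (k : ℤ) ∣ v.1 → (k : ℤ) ∣ v.2 → ¬ n * k ∣ a * v.1 + b * v.2 := by
  constructor
  · rintro hv k hk ⟨x, hx⟩ ⟨y, hy⟩ ⟨z, hz⟩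
    have hk0 : (k : ℤ) ≠ 0 := by omega
    refine hv k hk (x, y) ⟨z, mul_left_cancel₀ hk0 ?_⟩ (Prod.ext hx.symm hy.symm)
    linear_combination hz - a * hx - b * hy
  · rintro hv k hk w ⟨z, hz⟩ rfl
    exact hv k hk (dvd_mul_right _ _) (dvd_mul_right _ _)
      ⟨z, by simp only [Prod.smul_fst, Prod.smul_snd, smul_eq_mul]; linear_combination k * hz⟩

theorem isVisibleInSet_iff_coprime (hn : n ≠ 0) {v : ℤ × ℤ} {c : ℤ}
    (hc : a * v.1 + b * v.2 = n * c) :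
    IsVisibleInSet {p : ℤ × ℤ | n ∣ a * p.1 + b * p.2} v ↔
      Nat.Coprime (Int.gcd v.1 v.2) c.natAbs := by
  simp only [isVisibleInSet_iff_forall_not_dvd, Nat.coprime_iff_forall_two_le_not_dvd, hc,
    mul_dvd_mul_iff_left hn, Int.natCast_dvd, Int.gcd, Nat.dvd_gcd_iff, and_imp]

end Visibility

theorem Int.coprime_gcd_add_mul {a b d e n : ℤ} (h : Int.gcd (Int.gcd a b) n = 1)
    (hdn : d ∣ n) (he : b - a = d * e) (i : ℤ) :
    Nat.Coprime (Int.gcd d i) (a + e * i).natAbs := by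
  change Int.gcd (Int.gcd d i) (a + e * i) = 1
  set g := Int.gcd (Int.gcd d i) (a + e * i)
  have hgc : (g : ℤ) ∣ a + e * i := Int.gcd_dvd_right _ _
  have hgd : (g : ℤ) ∣ d := (Int.gcd_dvd_left _ _).trans (Int.gcd_dvd_left _ _)
  have hgi : (g : ℤ) ∣ i := (Int.gcd_dvd_left _ _).trans (Int.gcd_dvd_right _ _)
  have hga : (g : ℤ) ∣ a := by
    simpa using dvd_sub hgc (hgi.mul_left e)
  have hgb : (g : ℤ) ∣ b := by
    simpa [← he] using dvd_add hga (hgd.mul_right e)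
  rw [← Nat.dvd_one, ← h]
  exact Int.dvd_gcd (Int.dvd_coe_gcd hga hgb) (hgd.trans hdn)

/-- With `Λ = {(u,v) : au + bv ≡ 0 (mod n)}` and `d = gcd(b−a,n)`, the point
`(n − i·n/d, i·n/d)` (for `0 ≤ i ≤ d`) is visible in `Λ` iff the residue class
`a(d−i) + bi` has order `n/d` in `ℤ/nℤ`, i.e. `gcd(a(d−i)+bi, n) = d`. -/
theorem visible_iff_order (n : ℕ) (hn : 1 ≤ n) (a b : ℤ)
    (h : Int.gcd (Int.gcd a b) n = 1) (d : ℕ) (hd : d = Int.gcd (b - a) n)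
    (i : ℕ) (hi : i ≤ d) :
    IsVisibleInSet {p : ℤ × ℤ | (n : ℤ) ∣ a * p.1 + b * p.2}
        ((n : ℤ) - (i : ℤ) * ((n / d : ℕ) : ℤ), (i : ℤ) * ((n / d : ℕ) : ℤ)) ↔
      Int.gcd (a * ((d - i : ℕ) : ℤ) + b * (i : ℤ)) n = d := by
  obtain ⟨e, he⟩ : (d : ℤ) ∣ b - a := hd ▸ Int.gcd_dvd_left _ _
  obtain ⟨m, rfl⟩ : d ∣ n := hd ▸ Int.natCast_dvd_natCast.mp (Int.gcd_dvd_right _ _)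
  have hd0 : 0 < d := Nat.pos_of_mul_pos_right hn
  set c := a + e * i
  have hsum : a * ((d - i : ℕ) : ℤ) + b * i = d * c := by
    push_cast [hi]
    linear_combination (i : ℤ) * he
  have hgcd : Int.gcd (((d * m : ℕ) : ℤ) - i * m) (i * m) = m * Int.gcd d i := by
    rw [show ((d * m : ℕ) : ℤ) - i * m = m * (d - i) by push_cast; ring, mul_comm (i : ℤ),
      Int.gcd_mul_left, Int.gcd_sub_self_left, Int.natAbs_natCast]
  have hvisible : IsVisibleInSet {p : ℤ × ℤ | ((d * m : ℕ) : ℤ) ∣ a * p.1 + b * p.2}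
      (((d * m : ℕ) : ℤ) - i * m, i * m) ↔ Nat.Coprime m c.natAbs := by
    rw [isVisibleInSet_iff_coprime (by omega) (c := c)
        (by push_cast [hi] at hsum ⊢; linear_combination (m : ℤ) * hsum),
      hgcd, Nat.coprime_mul_iff_left, and_iff_left
        (Int.coprime_gcd_add_mul h (Int.natCast_dvd_natCast.mpr (dvd_mul_right d m)) he i)]
  have horder : Int.gcd (d * c) ((d * m : ℕ) : ℤ) = d ↔ Nat.Coprime m c.natAbs := by
    rw [Nat.cast_mul, Int.gcd_mul_left, Int.natAbs_natCast, Nat.mul_eq_left hd0.ne', Int.gcd_comm]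
    rfl
  rw [Nat.mul_div_cancel_left m hd0, hvisible, hsum, horder]
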